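/- If f ∈ C²[0,1] ∩ C^{1}[0,1], then for all n ≥ j ≥ 2 and x ∈ [0,1], |f(x) − B_{n,j}(f;x)| ≤ (x(1−x)/(2n)) ‖f''‖_∞ + ((j−1)/n) ‖f'‖_∞. -/

import Mathlib

open Set Finset

/-- Bernstein basis polynomial `p_{n,k}(x) = C(n,k) x^k (1-x)^{n-k}`. -/
noncomputable def bp (n k : ℕ) (x : ℝ) : ℝ :=
  (n.choose k : ℝ) * x ^ k * (1 - x) ^ (n - k)

/-- AKR node `t_{n,k}^j = (k(k-1)⋯(k-j+1)/(n(n-1)⋯(n-j+1)))^{1/j}`. -/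
noncomputable def akrNode (n j k : ℕ) : ℝ :=
  ((∏ i ∈ Finset.range j, ((k : ℝ) - i)) / (∏ i ∈ Finset.range j, ((n : ℝ) - i))) ^ ((j : ℝ)⁻¹)

/-- Classical Bernstein operator. -/
noncomputable def bern (n : ℕ) (f : ℝ → ℝ) (x : ℝ) : ℝ :=
  ∑ k ∈ Finset.range (n + 1), f ((k : ℝ) / n) * bp n k x

/-- Aldaz–Kounchev–Render operator. -/
noncomputable def akr (n j : ℕ) (f : ℝ → ℝ) (x : ℝ) : ℝ :=
  ∑ k ∈ Finset.range (n + 1), f (akrNode n j k) * bp n k x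

/-- Bivariate tensor-product Bernstein operator. -/
noncomputable def bern2 (n m : ℕ) (f : ℝ → ℝ → ℝ) (x y : ℝ) : ℝ :=
  ∑ i ∈ Finset.range (n + 1), ∑ k ∈ Finset.range (m + 1),
    f ((i : ℝ) / n) ((k : ℝ) / m) * bp n i x * bp m k y

/-- Bivariate tensor-product AKR operator. -/
noncomputable def akr2 (n m j : ℕ) (f : ℝ → ℝ → ℝ) (x y : ℝ) : ℝ :=
  ∑ i ∈ Finset.range (n + 1), ∑ k ∈ Finset.range (m + 1),
    f (akrNode n j i) (akrNode m j k) * bp n i x * bp m k y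

/-!
Split `f - B_{n,j} f` as `(f - B_n f) + (B_n f - B_{n,j} f)`, with `B_n` the classical Bernstein
operator. Since the Bernstein weights have mean `x` and variance `x(1-x)/n`, the first-order
Taylor bound `|f t - f x - f' x (t - x)| ≤ ‖f''‖ (t - x)² / 2` gives
`|f x - B_n f x| ≤ x(1-x)/(2n) ‖f''‖`. For the second term, `f` is `‖f'‖`-Lipschitz and
`(k - j + 1)/n ≤ t_{n,k}^j ≤ k/n`: for `k ≥ j` the node is the `j`-th root of a product of the
factors `(k - i)/(n - i)`, `i < j`, which decrease from `k/n` to `(k - j + 1)/(n - j + 1)`,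
and for `k < j` it is `0`.
-/

lemma Convex.isMinOn_of_hasDerivWithinAt_mul_sub_nonneg {D : Set ℝ} (hD : Convex ℝ D)
    {F F' : ℝ → ℝ} (hF : ∀ s ∈ D, HasDerivWithinAt F (F' s) D s) {x : ℝ} (hx : x ∈ D)
    (hsign : ∀ s ∈ D, 0 ≤ F' s * (s - x)) : IsMinOn F D x := by
  have hFc : ContinuousOn F D := fun s hs => (hF s hs).continuousWithinAt
  have hderiv : ∀ E ⊆ D, ∀ s ∈ interior E, HasDerivWithinAt F (F' s) (interior E) s :=
    fun E hE s hs => (hF s (hE (interior_subset hs))).mono (interior_subset.trans hE)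
  intro t ht
  rcases le_total x t with hxt | htx
  · have hmono : MonotoneOn F (D ∩ Ici x) :=
      monotoneOn_of_hasDerivWithinAt_nonneg (hD.inter (convex_Ici x))
        (hFc.mono inter_subset_left) (hderiv _ inter_subset_left) fun s hs => by
          have hs' : x < s := by simpa using interior_mono inter_subset_right hs
          exact nonneg_of_mul_nonneg_left (hsign s (interior_subset hs).1) (sub_pos.2 hs')
    exact hmono ⟨hx, le_refl x⟩ ⟨ht, hxt⟩ hxt
  · have hanti : AntitoneOn F (D ∩ Iic x) :=
      antitoneOn_of_hasDerivWithinAt_nonpos (hD.inter (convex_Iic x))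
        (hFc.mono inter_subset_left) (hderiv _ inter_subset_left) fun s hs => by
          have hs' : s < x := by simpa using interior_mono inter_subset_right hs
          exact nonpos_of_mul_nonneg_left (hsign s (interior_subset hs).1) (sub_neg.2 hs')
    exact hanti ⟨ht, htx⟩ ⟨hx, le_refl x⟩ htx

/-- Both `C/2 (s - x)² ∓ (g s - g x - g' x (s - x))` have derivative of the sign of `s - x`,
hence are minimal at `x`, where they vanish. -/
lemma Convex.abs_sub_sub_deriv_mul_le {D : Set ℝ} (hD : Convex ℝ D) {g g' g'' : ℝ → ℝ}
    (hg : ∀ s ∈ D, HasDerivWithinAt g (g' s) D s)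
    (hg' : ∀ s ∈ D, HasDerivWithinAt g' (g'' s) D s)
    {C : ℝ} (hC : ∀ s ∈ D, |g'' s| ≤ C) {x t : ℝ} (hx : x ∈ D) (ht : t ∈ D) :
    |g t - g x - g' x * (t - x)| ≤ C / 2 * (t - x) ^ 2 := by
  have hlip : ∀ s ∈ D, |g' s - g' x| ≤ C * |s - x| := fun s hs =>
    hD.norm_image_sub_le_of_norm_hasDerivWithin_le hg' hC hx hs
  have hside : ∀ σ : ℝ, |σ| ≤ 1 →
      σ * (g t - g x - g' x * (t - x)) ≤ C / 2 * (t - x) ^ 2 := by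
    intro σ hσ
    let F : ℝ → ℝ := fun s => C / 2 * (s - x) ^ 2 - σ * (g s - g x - g' x * (s - x))
    have hF : ∀ s ∈ D, HasDerivWithinAt F (C * (s - x) - σ * (g' s - g' x)) D s := by
      intro s hs
      refine (((((hasDerivWithinAt_id s D).sub_const x).pow 2).const_mul (C / 2)).sub
        ((((hg s hs).sub_const (g x)).sub (((hasDerivWithinAt_id s D).sub_const x).const_mul
          (g' x))).const_mul σ)).congr_deriv ?_
      norm_num
      ring
    have hsign : ∀ s ∈ D, 0 ≤ (C * (s - x) - σ * (g' s - g' x)) * (s - x) := by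
      intro s hs
      have h1 : |σ * (g' s - g' x) * (s - x)| ≤ C * (s - x) ^ 2 :=
        calc |σ * (g' s - g' x) * (s - x)| = |σ| * |g' s - g' x| * |s - x| := by
              rw [abs_mul, abs_mul]
          _ ≤ 1 * (C * |s - x|) * |s - x| := by gcongr; exact hlip s hs
          _ = C * (s - x) ^ 2 := by rw [one_mul, mul_assoc, ← sq, sq_abs]
      nlinarith [le_abs_self (σ * (g' s - g' x) * (s - x))]
    have := hD.isMinOn_of_hasDerivWithinAt_mul_sub_nonneg hF hx hsign ht
    simpa [F] using this
  rw [abs_le]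
  constructor
  · linarith [hside (-1) (by simp)]
  · simpa using hside 1 (by simp)

lemma abs_le_iSup_abs_of_continuousOn {K : Set ℝ} (hK : IsCompact K) {h : ℝ → ℝ}
    (hh : ContinuousOn h K) {t : ℝ} (ht : t ∈ K) : |h t| ≤ ⨆ s : K, |h s| := by
  refine le_ciSup (f := fun s : K => |h s|) ?_ ⟨t, ht⟩
  exact (hK.image_of_continuousOn hh.abs).bddAbove.mono
    (by rintro _ ⟨s, rfl⟩; exact mem_image_of_mem _ s.2)

lemma bp_eq_eval (n k : ℕ) (x : ℝ) : bp n k x = (bernsteinPolynomial ℝ n k).eval x := by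
  simp [bernsteinPolynomial, bp, mul_assoc]

lemma bp_nonneg (n k : ℕ) {x : ℝ} (hx : x ∈ Icc (0 : ℝ) 1) : 0 ≤ bp n k x :=
  mul_nonneg (mul_nonneg (Nat.cast_nonneg _) (pow_nonneg hx.1 _)) (pow_nonneg (sub_nonneg.2 hx.2) _)

lemma sum_bp (n : ℕ) (x : ℝ) : ∑ k ∈ range (n + 1), bp n k x = 1 := by
  simpa [Polynomial.eval_finsetSum, bp_eq_eval] using
    congrArg (Polynomial.eval x) (bernsteinPolynomial.sum ℝ n)

lemma sum_div_sub_mul_bp {n : ℕ} (hn : n ≠ 0) (x : ℝ) :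
    ∑ k ∈ range (n + 1), ((k : ℝ) / n - x) * bp n k x = 0 := by
  have h := congrArg (Polynomial.eval x) (bernsteinPolynomial.sum_smul ℝ n)
  simp only [Polynomial.eval_finsetSum, nsmul_eq_mul, Polynomial.eval_mul,
    Polynomial.eval_natCast, Polynomial.eval_X, ← bp_eq_eval] at h
  simp only [sub_mul, sum_sub_distrib, ← mul_sum, sum_bp, div_mul_eq_mul_div, ← sum_div, h]
  field_simp
  ring

lemma sum_div_sub_sq_mul_bp {n : ℕ} (hn : n ≠ 0) (x : ℝ) :
    ∑ k ∈ range (n + 1), ((k : ℝ) / n - x) ^ 2 * bp n k x = x * (1 - x) / n := by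
  have h := congrArg (Polynomial.eval x) (bernsteinPolynomial.variance ℝ n)
  simp only [Polynomial.eval_finsetSum, Polynomial.eval_mul, Polynomial.eval_pow,
    Polynomial.eval_sub, Polynomial.eval_natCast, Polynomial.eval_X,
    Polynomial.eval_one, nsmul_eq_mul, ← bp_eq_eval] at h
  have hn' : (n : ℝ) ≠ 0 := Nat.cast_ne_zero.2 hn
  calc ∑ k ∈ range (n + 1), ((k : ℝ) / n - x) ^ 2 * bp n k x
      = (∑ k ∈ range (n + 1), ((n : ℝ) * x - k) ^ 2 * bp n k x) / n ^ 2 := by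
        rw [sum_div]
        refine sum_congr rfl fun k _ => ?_
        field_simp
        ring
    _ = x * (1 - x) / n := by
        rw [h]
        field_simp

lemma abs_sum_mul_bp_le {n : ℕ} {x : ℝ} (hx : x ∈ Icc (0 : ℝ) 1) {g h : ℕ → ℝ}
    (hgh : ∀ k ≤ n, |g k| ≤ h k) :
    |∑ k ∈ range (n + 1), g k * bp n k x| ≤ ∑ k ∈ range (n + 1), h k * bp n k x := by
  refine (abs_sum_le_sum_abs _ _).trans (sum_le_sum fun k hk => ?_)
  rw [abs_mul, abs_of_nonneg (bp_nonneg n k hx)]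
  exact mul_le_mul_of_nonneg_right (hgh k (Nat.lt_succ_iff.1 (mem_range.1 hk))) (bp_nonneg n k hx)

lemma natCast_div_mem_Icc {k n : ℕ} (hkn : k ≤ n) : (k : ℝ) / n ∈ Icc (0 : ℝ) 1 :=
  ⟨by positivity, div_le_one_of_le₀ (by exact_mod_cast hkn) (Nat.cast_nonneg n)⟩

lemma sub_div_sub_le_sub_div_sub {k n p q : ℝ} (hkn : k ≤ n) (hpq : p ≤ q) (hqn : q < n) :
    (k - q) / (n - q) ≤ (k - p) / (n - p) := by
  rw [div_le_div_iff₀ (by linarith) (by linarith)]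
  nlinarith

lemma akrNode_eq_zero_of_lt {n j k : ℕ} (hj : j ≠ 0) (hk : k < j) : akrNode n j k = 0 := by
  rw [akrNode, prod_eq_zero (mem_range.2 hk) (sub_self _), zero_div,
    Real.zero_rpow (inv_ne_zero (Nat.cast_ne_zero.2 hj))]

lemma akrNode_eq_rpow_prod_div (n j k : ℕ) :
    akrNode n j k = (∏ i ∈ range j, ((k : ℝ) - i) / ((n : ℝ) - i)) ^ ((j : ℝ)⁻¹) := by
  rw [akrNode, prod_div_distrib]

lemma akrNode_mem_Icc_of_le {n j k : ℕ} (hj : j ≠ 0) (hjk : j ≤ k) (hkn : k ≤ n) :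
    akrNode n j k ∈ Icc (((k : ℝ) - (j - 1)) / (n - (j - 1))) (k / n) := by
  have hkn' : (k : ℝ) ≤ n := by exact_mod_cast hkn
  have hjk' : (j : ℝ) ≤ k := by exact_mod_cast hjk
  have hlow : 0 ≤ ((k : ℝ) - (j - 1)) / (n - (j - 1)) := div_nonneg (by linarith) (by linarith)
  have hfac : ∀ i ∈ range j,
      ((k : ℝ) - (j - 1)) / (n - (j - 1)) ≤ ((k : ℝ) - i) / ((n : ℝ) - i) ∧
      ((k : ℝ) - i) / ((n : ℝ) - i) ≤ k / n := by
    intro i hi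
    have hij : (i : ℝ) ≤ j - 1 := by
      rw [le_sub_iff_add_le]
      exact_mod_cast Nat.lt_iff_add_one_le.1 (mem_range.1 hi)
    refine ⟨sub_div_sub_le_sub_div_sub hkn' hij (by linarith), ?_⟩
    simpa using sub_div_sub_le_sub_div_sub hkn' (Nat.cast_nonneg i) (by linarith)
  have hprod := fun i hi => hlow.trans (hfac i hi).1
  rw [akrNode_eq_rpow_prod_div, ← Real.pow_rpow_inv_natCast hlow hj,
    ← Real.pow_rpow_inv_natCast (by positivity : (0 : ℝ) ≤ k / n) hj]
  constructor <;> gcongr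
  · calc _ = ∏ _i ∈ range j, ((k : ℝ) - (j - 1)) / (n - (j - 1)) := by
          rw [prod_const, card_range]
      _ ≤ _ := prod_le_prod (fun _ _ => hlow) (fun i hi => (hfac i hi).1)
  · exact prod_nonneg hprod
  · exact (prod_le_prod hprod (fun i hi => (hfac i hi).2)).trans_eq
      (by rw [prod_const, card_range])

lemma akrNode_le_div {n j k : ℕ} (hj : j ≠ 0) (hkn : k ≤ n) : akrNode n j k ≤ k / n := by
  rcases lt_or_ge k j with hkj | hjk
  · rw [akrNode_eq_zero_of_lt hj hkj]
    positivity
  · exact (akrNode_mem_Icc_of_le hj hjk hkn).2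

lemma akrNode_nonneg {n j k : ℕ} (hj : j ≠ 0) (hkn : k ≤ n) : 0 ≤ akrNode n j k := by
  rcases lt_or_ge k j with hkj | hjk
  · rw [akrNode_eq_zero_of_lt hj hkj]
  · have hjk' : (j : ℝ) ≤ k := by exact_mod_cast hjk
    have hkn' : (k : ℝ) ≤ n := by exact_mod_cast hkn
    exact (div_nonneg (by linarith) (by linarith)).trans (akrNode_mem_Icc_of_le hj hjk hkn).1

lemma div_sub_akrNode_le {n j k : ℕ} (hj : j ≠ 0) (hkn : k ≤ n) :
    (k : ℝ) / n - akrNode n j k ≤ (j - 1) / n := by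
  rcases lt_or_ge k j with hkj | hjk
  · rw [akrNode_eq_zero_of_lt hj hkj, sub_zero]
    gcongr
    rw [le_sub_iff_add_le]
    exact_mod_cast hkj
  · have hlow := (akrNode_mem_Icc_of_le hj hjk hkn).1
    have hjk' : (j : ℝ) ≤ k := by exact_mod_cast hjk
    have hj' : (1 : ℝ) ≤ j := by exact_mod_cast Nat.one_le_iff_ne_zero.2 hj
    have hjn : (j : ℝ) ≤ n := by exact_mod_cast hjk.trans hkn
    have : ((k : ℝ) - (j - 1)) / n ≤ ((k : ℝ) - (j - 1)) / (n - (j - 1)) :=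
      div_le_div_of_nonneg_left (by linarith) (by linarith) (by linarith)
    have hsplit : (k : ℝ) / n = (k - (j - 1)) / n + (j - 1) / n := by ring
    linarith

lemma abs_sub_bern_le {n : ℕ} (hn : n ≠ 0) {f : ℝ → ℝ} {x c C : ℝ}
    (hx : x ∈ Icc (0 : ℝ) 1)
    (hf : ∀ t ∈ Icc (0 : ℝ) 1, |f t - f x - c * (t - x)| ≤ C / 2 * (t - x) ^ 2) :
    |f x - bern n f x| ≤ x * (1 - x) / (2 * n) * C := by
  have hterm : ∀ k ≤ n,
      |f x - f (k / n) + c * (k / n - x)| ≤ C / 2 * ((k : ℝ) / n - x) ^ 2 := by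
    intro k hkn
    rw [← abs_neg]
    convert hf _ (natCast_div_mem_Icc hkn) using 2
    ring
  calc |f x - bern n f x|
      = |∑ k ∈ range (n + 1), (f x - f (k / n) + c * (k / n - x)) * bp n k x| := by
        have hsplit : ∑ k ∈ range (n + 1), (f x - f (k / n) + c * (k / n - x)) * bp n k x
            = f x * ∑ k ∈ range (n + 1), bp n k x - bern n f x
              + c * ∑ k ∈ range (n + 1), ((k : ℝ) / n - x) * bp n k x := by
          simp only [bern, add_mul, sub_mul, sum_add_distrib, sum_sub_distrib, mul_sum,
            mul_assoc, mul_sub]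
        rw [hsplit, sum_bp, sum_div_sub_mul_bp hn, mul_one, mul_zero, add_zero]
    _ ≤ ∑ k ∈ range (n + 1), C / 2 * ((k : ℝ) / n - x) ^ 2 * bp n k x :=
        abs_sum_mul_bp_le hx hterm
    _ = x * (1 - x) / (2 * n) * C := by
        simp only [mul_assoc, ← mul_sum, sum_div_sub_sq_mul_bp hn]
        ring

lemma abs_bern_sub_akr_le {n j : ℕ} (hj : j ≠ 0) {f : ℝ → ℝ} {L : ℝ}
    (hf : ∀ a ∈ Icc (0 : ℝ) 1, ∀ b ∈ Icc (0 : ℝ) 1, |f a - f b| ≤ L * |a - b|)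
    {x : ℝ} (hx : x ∈ Icc (0 : ℝ) 1) :
    |bern n f x - akr n j f x| ≤ (j - 1) / n * L := by
  have hL : 0 ≤ L := (abs_nonneg _).trans <| by
    simpa using hf 1 (right_mem_Icc.2 zero_le_one) 0 (left_mem_Icc.2 zero_le_one)
  have hterm : ∀ k ≤ n, |f (k / n) - f (akrNode n j k)| ≤ (j - 1) / n * L := by
    intro k hkn
    have hnode : akrNode n j k ∈ Icc (0 : ℝ) 1 :=
      ⟨akrNode_nonneg hj hkn, (akrNode_le_div hj hkn).trans (natCast_div_mem_Icc hkn).2⟩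
    calc |f (k / n) - f (akrNode n j k)| ≤ L * |k / n - akrNode n j k| :=
          hf _ (natCast_div_mem_Icc hkn) _ hnode
      _ ≤ L * ((j - 1) / n) := by
          rw [abs_of_nonneg (sub_nonneg.2 (akrNode_le_div hj hkn))]
          exact mul_le_mul_of_nonneg_left (div_sub_akrNode_le hj hkn) hL
      _ = (j - 1) / n * L := mul_comm _ _
  calc |bern n f x - akr n j f x|
      = |∑ k ∈ range (n + 1), (f (k / n) - f (akrNode n j k)) * bp n k x| := by
        simp only [bern, akr, sub_mul, sum_sub_distrib]
    _ ≤ ∑ k ∈ range (n + 1), (j - 1) / n * L * bp n k x := abs_sum_mul_bp_le hx hterm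
    _ = (j - 1) / n * L := by rw [← mul_sum, sum_bp, mul_one]

theorem stmt16_general (n j : ℕ) (hj : 2 ≤ j) (hn : j ≤ n) (f f' f'' : ℝ → ℝ)
    (hf' : ∀ x ∈ Icc (0:ℝ) 1, HasDerivWithinAt f (f' x) (Icc 0 1) x)
    (hf'' : ∀ x ∈ Icc (0:ℝ) 1, HasDerivWithinAt f' (f'' x) (Icc 0 1) x)
    (hc'' : ContinuousOn f'' (Icc 0 1)) :
    ∀ x ∈ Icc (0:ℝ) 1,
      |f x - akr n j f x| ≤
        x * (1 - x) / (2 * n) * (⨆ t : Icc (0:ℝ) 1, |f'' t|) +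
          (((j : ℝ) - 1) / n) * (⨆ t : Icc (0:ℝ) 1, |f' t|) := by
  intro x hx
  have hf'_cont : ContinuousOn f' (Icc 0 1) := fun t ht => (hf'' t ht).continuousWithinAt
  have hM1 : ∀ t ∈ Icc (0:ℝ) 1, |f' t| ≤ ⨆ s : Icc (0:ℝ) 1, |f' s| := fun t ht =>
    abs_le_iSup_abs_of_continuousOn isCompact_Icc hf'_cont ht
  have hM2 : ∀ t ∈ Icc (0:ℝ) 1, |f'' t| ≤ ⨆ s : Icc (0:ℝ) 1, |f'' s| := fun t ht =>
    abs_le_iSup_abs_of_continuousOn isCompact_Icc hc'' ht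
  have hlip : ∀ a ∈ Icc (0:ℝ) 1, ∀ b ∈ Icc (0:ℝ) 1,
      |f a - f b| ≤ (⨆ t : Icc (0:ℝ) 1, |f' t|) * |a - b| := fun a ha b hb =>
    (convex_Icc 0 1).norm_image_sub_le_of_norm_hasDerivWithin_le hf' hM1 hb ha
  calc |f x - akr n j f x| ≤ |f x - bern n f x| + |bern n f x - akr n j f x| := abs_sub_le _ _ _
    _ ≤ _ := add_le_add
        (abs_sub_bern_le (by omega) hx fun t ht =>
          (convex_Icc 0 1).abs_sub_sub_deriv_mul_le hf' hf'' hM2 hx ht)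
        (abs_bern_sub_akr_le (by omega) hlip hx)

theorem stmt16 (n j : ℕ) (hj : 2 ≤ j) (hn : j ≤ n) (f f' f'' : ℝ → ℝ)
    (hf' : ∀ x ∈ Icc (0:ℝ) 1, HasDerivWithinAt f (f' x) (Icc 0 1) x)
    (hf'' : ∀ x ∈ Icc (0:ℝ) 1, HasDerivWithinAt f' (f'' x) (Icc 0 1) x)
    (hc' : ContinuousOn f' (Icc 0 1))
    (hc'' : ContinuousOn f'' (Icc 0 1)) :
    ∀ x ∈ Icc (0:ℝ) 1,
      |f x - akr n j f x| ≤
        x * (1 - x) / (2 * n) * (⨆ t : Icc (0:ℝ) 1, |f'' t|) +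
          (((j : ℝ) - 1) / n) * (⨆ t : Icc (0:ℝ) 1, |f' t|) :=
  stmt16_general n j hj hn f f' f'' hf' hf'' hc''
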